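/- If A ∈ GL₂(ℤ) has two negative real eigenvalues, then the semidirect product ℤ² ⋊_A ℤ is not bi-orderable. -/

import Mathlib

open Matrix Polynomial

/-- A group is bi-orderable if it admits a strict total order invariant under
left and right multiplication. -/
def IsBiOrderable (G : Type*) [Group G] : Prop :=
  ∃ r : G → G → Prop, IsStrictTotalOrder G r ∧
    (∀ f g h : G, r g h → r (f * g) (f * h)) ∧
    (∀ f g h : G, r g h → r (g * f) (h * f))

/-- The automorphism of `ℤ²` (written multiplicatively) given by a matrix
`A ∈ GL₂(ℤ)`. -/
noncomputable def glAut (A : GL (Fin 2) ℤ) : MulAut (Multiplicative (Fin 2 → ℤ)) :=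
  AddEquiv.toMultiplicative
    ((Matrix.GeneralLinearGroup.toLin A).toLinearEquiv.toAddEquiv)

/-- The monodromy action of `ℤ` on `ℤ²` generated by `A ∈ GL₂(ℤ)`. -/
noncomputable def monodromy (A : GL (Fin 2) ℤ) :
    Multiplicative ℤ →* MulAut (Multiplicative (Fin 2 → ℤ)) :=
  zpowersHom _ (glAut A)

/-!
Conjugation by the generator of `ℤ` acts on `ℤ²` by `A`, so a bi-order of `ℤ² ⋊_A ℤ`
restricts to a linear order of `ℤ²` whose nonnegative cone `C` is `A`-invariant. Negative
eigenvalues give `tr A < 0 < det A = 1`, and Cayley–Hamilton then writes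
`-v = A²v + |tr A| • Av`, which lies in `C` whenever `v` does. So `C = {0}`, contradicting
`C ∪ -C = ℤ²`.
-/

open Function

theorem IsBiOrderable.exists_linearOrder {G : Type*} [Group G] (h : IsBiOrderable G) :
    ∃ _ : LinearOrder G, MulLeftMono G ∧ MulRightMono G := by
  classical
  obtain ⟨r, _, hleft, hright⟩ := h
  let := linearOrderOfSTO r
  have : MulLeftStrictMono G := ⟨fun f _ _ => hleft f _ _⟩
  have : MulRightStrictMono G := ⟨fun f _ _ => hright f _ _⟩
  exact ⟨_, mulLeftMono_of_mulLeftStrictMono G, mulRightMono_of_mulRightStrictMono G⟩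

theorem subsingleton_of_mapsTo_cone {S V : Type*} [AddCommGroup V] [SetLike S V]
    [AddGroupConeClass S V] (C : S) [HasMemOrNegMem C] (f : V → V) (hf : Set.MapsTo f C C)
    (a : ℕ) (hrel : ∀ v, f (f v) + a • f v + v = 0) : Subsingleton V := by
  have hC : ∀ v ∈ C, v = 0 := fun v hv =>
    eq_zero_of_mem_of_neg_mem hv <| eq_neg_of_add_eq_zero_left (hrel v) ▸
      add_mem (hf (hf hv)) (nsmul_mem (hf hv) a)
  refine subsingleton_of_forall_eq 0 fun v => ?_
  rcases mem_or_neg_mem C v with hv | hv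
  · exact hC v hv
  · exact neg_eq_zero.mp (hC (-v) hv)

namespace AddGroupCone

variable {G V : Type*} [Group G] [LinearOrder G] [MulLeftMono G] [AddCommGroup V]
  (φ : Multiplicative V →* G)

def comapOneLE (hφ : Injective φ) : AddGroupCone V where
  carrier := {v | 1 ≤ φ (.ofAdd v)}
  add_mem' {u v} hu hv := by
    simpa only [Set.mem_ofPred_eq, ofAdd_add, map_mul] using one_le_mul hu hv
  zero_mem' := by simp
  eq_zero_of_mem_of_neg_mem' {v} hv hnv := by
    simp only [Set.mem_ofPred_eq, ofAdd_neg, map_inv, Left.one_le_inv_iff] at hv hnv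
    exact Multiplicative.ofAdd.injective (hφ ((le_antisymm hnv hv).trans (map_one φ).symm))

@[simp]
theorem mem_comapOneLE (hφ : Injective φ) {v : V} :
    v ∈ comapOneLE φ hφ ↔ 1 ≤ φ (.ofAdd v) :=
  Iff.rfl

instance (hφ : Injective φ) : HasMemOrNegMem (comapOneLE φ hφ) where
  mem_or_neg_mem v := by simpa using le_total 1 (φ (.ofAdd v))

theorem mapsTo_comapOneLE [MulRightMono G] (hφ : Injective φ) {f : V → V} (t : G)
    (hf : ∀ v, t * φ (.ofAdd v) * t⁻¹ = φ (.ofAdd (f v))) :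
    Set.MapsTo f (comapOneLE φ hφ) (comapOneLE φ hφ) := by
  intro v hv
  simpa [hf] using mul_le_mul_left (mul_le_mul_right hv t) t⁻¹

end AddGroupCone

namespace Matrix
variable {n R : Type*} [Fintype n] [DecidableEq n] [CommRing R]

theorem trace_eq_add_of_charpoly_eq [IsDomain R] {M : Matrix n n R} {a b : R}
    (h : M.charpoly = (X - C a) * (X - C b)) : M.trace = a + b := by
  rw [trace_eq_sum_roots_charpoly_of_splits (h ▸ (Splits.X_sub_C a).mul (Splits.X_sub_C b)), h,
    roots_mul (mul_ne_zero (X_sub_C_ne_zero a) (X_sub_C_ne_zero b)), roots_X_sub_C, roots_X_sub_C]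
  simp

theorem det_eq_mul_of_charpoly_eq [IsDomain R] {M : Matrix n n R} {a b : R}
    (h : M.charpoly = (X - C a) * (X - C b)) : M.det = a * b := by
  rw [det_eq_prod_roots_charpoly_of_splits (h ▸ (Splits.X_sub_C a).mul (Splits.X_sub_C b)), h,
    roots_mul (mul_ne_zero (X_sub_C_ne_zero a) (X_sub_C_ne_zero b)), roots_X_sub_C, roots_X_sub_C]
  simp

theorem sq_sub_trace_smul_add_det_smul_one_eq_zero [Nontrivial R] (M : Matrix (Fin 2) (Fin 2) R) :
    M ^ 2 - M.trace • M + M.det • (1 : Matrix (Fin 2) (Fin 2) R) = 0 := by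
  simpa [charpoly_fin_two, Algebra.smul_def] using M.aeval_self_charpoly

theorem mulVec_mulVec_add_nsmul_mulVec_add_eq_zero {M : Matrix (Fin 2) (Fin 2) ℤ}
    (htr : M.trace ≤ 0) (hdet : M.det = 1) (v : Fin 2 → ℤ) :
    M *ᵥ (M *ᵥ v) + (-M.trace).toNat • M *ᵥ v + v = 0 := by
  have h := congrArg (· *ᵥ v) M.sq_sub_trace_smul_add_det_smul_one_eq_zero
  simp only [hdet, one_smul, sq, add_mulVec, sub_mulVec, smul_mulVec, one_mulVec,
    zero_mulVec] at h
  rw [mulVec_mulVec, ← natCast_zsmul, Int.toNat_of_nonneg (neg_nonneg.mpr htr), neg_smul,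
    ← sub_eq_add_neg]
  exact h

theorem trace_neg_and_det_pos_of_charpoly_eq {M : Matrix n n ℤ} {a b : ℝ}
    (h : (M.map ((↑) : ℤ → ℝ)).charpoly = (X - C a) * (X - C b)) (ha : a < 0) (hb : b < 0) :
    M.trace < 0 ∧ 0 < M.det := by
  have htr : (M.trace : ℝ) = a + b :=
    (AddMonoidHom.map_trace (Int.castAddHom ℝ) M).trans (trace_eq_add_of_charpoly_eq h)
  have hdet : (M.det : ℝ) = a * b := by
    rw [Int.cast_det, det_eq_mul_of_charpoly_eq h]
  constructor
  · exact_mod_cast htr ▸ (add_neg ha hb)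
  · exact_mod_cast hdet ▸ (mul_pos_of_neg_of_neg ha hb)

end Matrix

theorem Matrix.GeneralLinearGroup.det_eq_one_of_pos {n : Type*} [Fintype n] [DecidableEq n]
    (A : GL n ℤ) (h : 0 < (A : Matrix n n ℤ).det) : (A : Matrix n n ℤ).det = 1 :=
  (Int.isUnit_iff.mp (isUnits_det_units A)).resolve_right (by omega)

theorem inr_mul_inl_mul_inr_inv_monodromy (A : GL (Fin 2) ℤ) (v : Fin 2 → ℤ) :
    (SemidirectProduct.inr (.ofAdd 1) : SemidirectProduct _ _ (monodromy A)) *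
        SemidirectProduct.inl (.ofAdd v) * (SemidirectProduct.inr (.ofAdd 1))⁻¹ =
      SemidirectProduct.inl (.ofAdd ((A : Matrix (Fin 2) (Fin 2) ℤ) *ᵥ v)) := by
  rw [← map_inv, ← SemidirectProduct.inl_aut]
  rfl

/-- If `A ∈ GL₂(ℤ)` has two negative real eigenvalues, then the semidirect
product `ℤ² ⋊_A ℤ` (the fundamental group of the torus bundle over `S¹` with
monodromy `A`) is not bi-orderable. -/
theorem torusBundleGroup_not_biOrderable (A : GL (Fin 2) ℤ) (lam₁ lam₂ : ℝ)
    (hchar : ((A : Matrix (Fin 2) (Fin 2) ℤ).map ((↑·) : ℤ → ℝ)).charpoly =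
      (X - C lam₁) * (X - C lam₂))
    (h₁ : lam₁ < 0) (h₂ : lam₂ < 0) :
    ¬ IsBiOrderable (SemidirectProduct (Multiplicative (Fin 2 → ℤ))
        (Multiplicative ℤ) (monodromy A)) := by
  obtain ⟨htr, hdet⟩ := Matrix.trace_neg_and_det_pos_of_charpoly_eq hchar h₁ h₂
  intro hG
  obtain ⟨_, _, _⟩ := hG.exists_linearOrder
  have := subsingleton_of_mapsTo_cone
    (AddGroupCone.comapOneLE _ SemidirectProduct.inl_injective) _
    (AddGroupCone.mapsTo_comapOneLE _ _ _ (inr_mul_inl_mul_inr_inv_monodromy A)) _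
    (Matrix.mulVec_mulVec_add_nsmul_mulVec_add_eq_zero htr.le (A.det_eq_one_of_pos hdet))
  exact not_subsingleton (Fin 2 → ℤ) this
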